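/- arXiv:1909.10472 — 3 statements merged into one kernel-verified Lean document; each statement's English description precedes it below -/
import Mathlib

section
/- Abstract small-gain lemma (core of Theorem 2): Let σ > 0, G ≥ 0, γ, β, κ, L̃, K̃ > 0 and set Φ = 2βγκL̃; assume Φ < 1. Suppose U, W, D : [0,∞) → [0,∞) satisfy, for all t ≥ 0: (i) W(t)·e^{σt} ≤ G·W(0) + γ·sup_{0 ≤ s ≤ t}(D(s)·e^{σs}); (ii) sup_{0 ≤ s ≤ t}(D(s)·e^{σs}) ≤ 2βκ·sup_{0 ≤ s ≤ t}(U(s)·e^{σs}); (iii) U(t) ≤ L̃·W(t) and W(t) ≤ K̃·U(t); and (iv) sup_{0 ≤ s ≤ t}(W(s)·e^{σs}) < ∞. Then U(t) ≤ G·(1−Φ)^{−1}·K̃·L̃·e^{−σt}·U(0) for all t ≥ 0. -/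
/-!
Write `S_f(t) = sup_{0 ≤ s ≤ t} f(s) e^{σs}` and `Φ = 2βγκL̃`. Since `U ≤ L̃ W` pointwise,
`S_U ≤ L̃ S_W`; combining (i), (ii) and the monotonicity of `S_U` in `t` bounds every `W(s) e^{σs}`,
`s ≤ t`, by `G W(0) + Φ S_W(t)`, hence `S_W(t) ≤ G W(0) + Φ S_W(t)`. As `S_W(t)` is finite by (iv)
and `Φ < 1`, this gives `S_W(t) ≤ G W(0) / (1 - Φ)`, and `U(t) e^{σt} ≤ L̃ S_W(t)`, `W(0) ≤ K̃ U(0)`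
finish the estimate.
-/

open Set

namespace WeightedSup

noncomputable def weightedSup (σ : ℝ) (f : ℝ → ℝ) (t : ℝ) : ℝ :=
  sSup ((fun s => f s * Real.exp (σ * s)) '' Icc 0 t)

variable {σ t : ℝ} {f g : ℝ → ℝ}

lemma image_nonempty (ht : 0 ≤ t) :
    ((fun s => f s * Real.exp (σ * s)) '' Icc 0 t).Nonempty :=
  (nonempty_Icc.2 ht).image _

lemma le_weightedSup (hf : BddAbove ((fun s => f s * Real.exp (σ * s)) '' Icc 0 t))
    {s : ℝ} (hs : s ∈ Icc 0 t) : f s * Real.exp (σ * s) ≤ weightedSup σ f t :=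
  le_csSup hf (mem_image_of_mem _ hs)

lemma weightedSup_le (ht : 0 ≤ t) {b : ℝ} (h : ∀ s ∈ Icc 0 t, f s * Real.exp (σ * s) ≤ b) :
    weightedSup σ f t ≤ b :=
  csSup_le (image_nonempty ht) (forall_mem_image.2 h)

lemma weightedSup_mono (hf : BddAbove ((fun s => f s * Real.exp (σ * s)) '' Icc 0 t))
    {s : ℝ} (hs : s ∈ Icc 0 t) : weightedSup σ f s ≤ weightedSup σ f t :=
  csSup_le_csSup hf (image_nonempty hs.1) (image_mono (Icc_subset_Icc_right hs.2))

lemma mul_exp_le_mul {c : ℝ} (hgf : ∀ s, g s ≤ c * f s) (s : ℝ) :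
    g s * Real.exp (σ * s) ≤ c * (f s * Real.exp (σ * s)) := by
  rw [← mul_assoc]
  exact mul_le_mul_of_nonneg_right (hgf s) (Real.exp_pos _).le

lemma bddAbove_of_le_mul {c : ℝ} (hc : 0 ≤ c) (hgf : ∀ s, g s ≤ c * f s)
    (hf : BddAbove ((fun s => f s * Real.exp (σ * s)) '' Icc 0 t)) :
    BddAbove ((fun s => g s * Real.exp (σ * s)) '' Icc 0 t) := by
  obtain ⟨M, hM⟩ := hf
  refine ⟨c * M, forall_mem_image.2 fun s hs => ?_⟩
  exact (mul_exp_le_mul hgf s).trans (mul_le_mul_of_nonneg_left (hM (mem_image_of_mem _ hs)) hc)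

lemma weightedSup_le_mul {c : ℝ} (hc : 0 ≤ c) (hgf : ∀ s, g s ≤ c * f s)
    (hf : BddAbove ((fun s => f s * Real.exp (σ * s)) '' Icc 0 t)) (ht : 0 ≤ t) :
    weightedSup σ g t ≤ c * weightedSup σ f t :=
  weightedSup_le ht fun s hs =>
    (mul_exp_le_mul hgf s).trans (mul_le_mul_of_nonneg_left (le_weightedSup hf hs) hc)

lemma weightedSup_le_div_of_small_gain {U W D : ℝ → ℝ} {a γ c L : ℝ} (hγ : 0 ≤ γ) (hc : 0 ≤ c)
    (hL : 0 ≤ L) (hgain : γ * c * L < 1) (hUW : ∀ s, U s ≤ L * W s)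
    (hWbdd : BddAbove ((fun s => W s * Real.exp (σ * s)) '' Icc 0 t)) (ht : 0 ≤ t)
    (hW : ∀ s ∈ Icc 0 t, W s * Real.exp (σ * s) ≤ a + γ * weightedSup σ D s)
    (hD : ∀ s ∈ Icc 0 t, weightedSup σ D s ≤ c * weightedSup σ U s) :
    weightedSup σ W t ≤ a / (1 - γ * c * L) := by
  have hloop : weightedSup σ W t ≤ a + γ * c * L * weightedSup σ W t :=
    weightedSup_le ht fun s hs => calc
      W s * Real.exp (σ * s) ≤ a + γ * (c * weightedSup σ U s) := by grw [hW s hs, hD s hs]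
      _ ≤ a + γ * (c * weightedSup σ U t) := by
        grw [weightedSup_mono (bddAbove_of_le_mul hL hUW hWbdd) hs]
      _ ≤ a + γ * (c * (L * weightedSup σ W t)) := by grw [weightedSup_le_mul hL hUW hWbdd ht]
      _ = a + γ * c * L * weightedSup σ W t := by ring
  rw [le_div_iff₀ (by linarith)]
  linarith

lemma le_mul_exp_neg_of_mul_exp_le {x C : ℝ} (h : x * Real.exp (σ * t) ≤ C) :
    x ≤ C * Real.exp (-σ * t) := by
  rwa [neg_mul, Real.exp_neg, ← div_eq_mul_inv, le_div_iff₀ (Real.exp_pos _)]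

end WeightedSup

open WeightedSup in
theorem statement_9_general (σ G γ β κ Ltil Ktil : ℝ)
    (hG : 0 ≤ G) (hγ : 0 < γ) (hβ : 0 < β) (hκ : 0 < κ)
    (hL : 0 < Ltil)
    (hΦ : 2 * β * γ * κ * Ltil < 1)
    (U W D : ℝ → ℝ)
    (h1 : ∀ t ≥ (0:ℝ), W t * Real.exp (σ * t) ≤
      G * W 0 + γ * sSup ((fun s => D s * Real.exp (σ * s)) '' Set.Icc 0 t))
    (h2 : ∀ t ≥ (0:ℝ),
      sSup ((fun s => D s * Real.exp (σ * s)) '' Set.Icc 0 t) ≤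
        2 * β * κ * sSup ((fun s => U s * Real.exp (σ * s)) '' Set.Icc 0 t))
    (h3 : ∀ t : ℝ, U t ≤ Ltil * W t ∧ W t ≤ Ktil * U t)
    (h4 : ∀ t ≥ (0:ℝ), BddAbove ((fun s => W s * Real.exp (σ * s)) '' Set.Icc 0 t)) :
    ∀ t ≥ (0:ℝ),
      U t ≤ G * (1 - 2 * β * γ * κ * Ltil)⁻¹ * Ktil * Ltil * Real.exp (-σ * t) * U 0 := by
  intro t ht
  have hgap : 0 < 1 - γ * (2 * β * κ) * Ltil := by linarith
  have hUW := fun s => (h3 s).1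
  have hW : weightedSup σ W t ≤ G * W 0 / (1 - γ * (2 * β * κ) * Ltil) :=
    weightedSup_le_div_of_small_gain hγ.le (by positivity) hL.le (by linarith) hUW (h4 t ht) ht
      (fun s hs => h1 s hs.1) (fun s hs => h2 s hs.1)
  have hUt : U t * Real.exp (σ * t) ≤ G * (1 - 2 * β * γ * κ * Ltil)⁻¹ * Ktil * Ltil * U 0 := calc
    U t * Real.exp (σ * t) ≤ Ltil * weightedSup σ W t :=
      (mul_exp_le_mul hUW t).trans
        (mul_le_mul_of_nonneg_left (le_weightedSup (h4 t ht) ⟨ht, le_rfl⟩) hL.le)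
    _ ≤ Ltil * (G * W 0 / (1 - γ * (2 * β * κ) * Ltil)) := by grw [hW]
    _ ≤ Ltil * (G * (Ktil * U 0) / (1 - γ * (2 * β * κ) * Ltil)) := by grw [(h3 0).2]
    _ = G * (1 - 2 * β * γ * κ * Ltil)⁻¹ * Ktil * Ltil * U 0 := by ring
  calc U t ≤ G * (1 - 2 * β * γ * κ * Ltil)⁻¹ * Ktil * Ltil * U 0 * Real.exp (-σ * t) :=
        le_mul_exp_neg_of_mul_exp_le hUt
    _ = G * (1 - 2 * β * γ * κ * Ltil)⁻¹ * Ktil * Ltil * Real.exp (-σ * t) * U 0 := by ring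

/-- abstract small-gain lemma, core of Theorem 2:
under the fading-memory estimates (i)–(iii) and the finiteness condition (iv),
the small-gain condition `Φ = 2βγκL̃ < 1` gives
`U(t) ≤ G (1−Φ)⁻¹ K̃ L̃ e^{−σt} U(0)`. -/
theorem statement_9 (σ G γ β κ Ltil Ktil : ℝ)
    (hσ : 0 < σ) (hG : 0 ≤ G) (hγ : 0 < γ) (hβ : 0 < β) (hκ : 0 < κ)
    (hL : 0 < Ltil) (hK : 0 < Ktil)
    (hΦ : 2 * β * γ * κ * Ltil < 1)
    (U W D : ℝ → ℝ)
    (hUpos : ∀ t, 0 ≤ U t) (hWpos : ∀ t, 0 ≤ W t) (hDpos : ∀ t, 0 ≤ D t)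
    (h1 : ∀ t ≥ (0:ℝ), W t * Real.exp (σ * t) ≤
      G * W 0 + γ * sSup ((fun s => D s * Real.exp (σ * s)) '' Set.Icc 0 t))
    (h2 : ∀ t ≥ (0:ℝ),
      sSup ((fun s => D s * Real.exp (σ * s)) '' Set.Icc 0 t) ≤
        2 * β * κ * sSup ((fun s => U s * Real.exp (σ * s)) '' Set.Icc 0 t))
    (h3 : ∀ t : ℝ, U t ≤ Ltil * W t ∧ W t ≤ Ktil * U t)
    (h4 : ∀ t ≥ (0:ℝ), BddAbove ((fun s => W s * Real.exp (σ * s)) '' Set.Icc 0 t)) :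
    ∀ t ≥ (0:ℝ),
      U t ≤ G * (1 - 2 * β * γ * κ * Ltil)⁻¹ * Ktil * Ltil * Real.exp (-σ * t) * U 0 :=
  statement_9_general σ G γ β κ Ltil Ktil hG hγ hβ hκ hL hΦ U W D h1 h2 h3 h4
end

section
/- Direct backstepping kernel verification: Let γ ∈ ℝ and define K : ℝ² → ℝ by K(x,y) = −γ·y·Σ_{m=0}^∞ ((γ(x²−y²)/4)^m)/(2·m!·(m+1)!). Then K is infinitely differentiable, and: (i) K_xx(x,y) − K_yy(x,y) = γ·K(x,y) for all (x,y); (ii) K(x,0) = 0 for all x; (iii) K(x,x) = −γ·x/2 for all x. -/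
noncomputable def Kker (γ x y : ℝ) : ℝ :=
  -γ * y * ∑' m : ℕ, (γ * (x^2 - y^2) / 4)^m / (2 * (m.factorial : ℝ) * ((m+1).factorial : ℝ))

namespace St11

open FormalMultilinearSeries

noncomputable def c (k m : ℕ) : ℝ := 1 / (2 * (m.factorial : ℝ) * ((m + k).factorial : ℝ))

noncomputable def S (k : ℕ) (t : ℝ) : ℝ := ∑' m : ℕ, c k m * t ^ m

lemma c_pos (k m : ℕ) : 0 < c k m := by
  unfold c; positivity

lemma abs_c_le (k m : ℕ) : |c k m| ≤ 1 / m.factorial := by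
  rw [abs_of_pos (c_pos k m)]
  unfold c
  have h1 : (1:ℝ) ≤ ((m+k).factorial : ℝ) := by exact_mod_cast (m+k).factorial_pos
  have h2 : (0:ℝ) < (m.factorial : ℝ) := by exact_mod_cast m.factorial_pos
  rw [div_le_div_iff₀ (by positivity) h2]
  nlinarith

lemma summable_c (k : ℕ) (x : ℝ) : Summable (fun m : ℕ => c k m * x ^ m) := by
  refine Summable.of_norm_bounded (g := fun m => |x| ^ m / m.factorial)
    (Real.summable_pow_div_factorial |x|) (fun m => ?_)
  show ‖c k m * x ^ m‖ ≤ |x| ^ m / m.factorial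
  calc ‖c k m * x ^ m‖ = |c k m| * |x| ^ m := by
        rw [norm_mul, norm_pow, Real.norm_eq_abs, Real.norm_eq_abs]
    _ ≤ (1 / m.factorial) * |x| ^ m :=
        mul_le_mul_of_nonneg_right (abs_c_le k m) (by positivity)
    _ = |x| ^ m / m.factorial := by ring

lemma c_succ_mul (k m : ℕ) : c k (m+1) * (m+1) = c (k+1) m := by
  unfold c
  have h2 : m + 1 + k = (m + k + 1) := by omega
  rw [h2, Nat.factorial_succ m]
  have h3 : m + (k+1) = m + k + 1 := by omega
  rw [h3]
  have hm : ((m.factorial : ℝ)) ≠ 0 := by exact_mod_cast m.factorial_pos.ne'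
  have hk : (((m+k+1).factorial : ℝ)) ≠ 0 := by exact_mod_cast (m+k+1).factorial_pos.ne'
  push_cast
  field_simp

lemma hasDerivAt_S (k : ℕ) (t : ℝ) : HasDerivAt (S k) (S (k+1) t) t := by
  set R : ℝ := |t| + 1 with hR
  have hR0 : 0 < R := by positivity
  have hts : t ∈ Metric.ball (0:ℝ) R := by
    simp only [Metric.mem_ball, dist_zero_right, Real.norm_eq_abs, hR]
    linarith
  set u : ℕ → ℝ := fun m => match m with
    | 0 => 0
    | (n+1) => R ^ n / n.factorial
    with hu_def
  have hu : Summable u := by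
    rw [← summable_nat_add_iff 1]
    exact Real.summable_pow_div_factorial R
  have hbound : ∀ (n : ℕ) (x : ℝ), x ∈ Metric.ball (0:ℝ) R →
      ‖c k n * (↑n * x ^ (n-1))‖ ≤ u n := by
    intro n x hx
    simp only [Metric.mem_ball, dist_zero_right, Real.norm_eq_abs] at hx
    match n with
    | 0 => simp [hu_def]
    | (n+1) =>
      show |c k (n+1) * ((n+1 : ℕ) * x ^ n)| ≤ R ^ n / n.factorial
      rw [abs_mul, abs_mul, abs_pow]
      have h1 : |c k (n+1)| * |((n+1 : ℕ) : ℝ)| = c (k+1) n := by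
        rw [abs_of_pos (c_pos k (n+1)), abs_of_pos (by positivity)]
        push_cast
        exact c_succ_mul k n
      rw [← mul_assoc, h1]
      calc c (k+1) n * |x| ^ n ≤ (1 / n.factorial) * R ^ n := by
            apply mul_le_mul
            · rw [← abs_of_pos (c_pos (k+1) n)]; exact abs_c_le (k+1) n
            · exact pow_le_pow_left₀ (abs_nonneg x) hx.le n
            · positivity
            · positivity
        _ = R ^ n / n.factorial := by ring
  have hder : ∀ (n : ℕ) (x : ℝ), x ∈ Metric.ball (0:ℝ) R →
      HasDerivAt (fun y => c k n * y ^ n) (c k n * (↑n * x ^ (n-1))) x := by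
    intro n x _
    exact (hasDerivAt_pow n x).const_mul (c k n)
  have H := hasDerivAt_tsum_of_isPreconnected hu Metric.isOpen_ball
    (convex_ball (0:ℝ) R).isPreconnected hder hbound hts (summable_c k t) hts
  have hsum : Summable (fun n : ℕ => c k n * (↑n * t ^ (n-1))) :=
    hu.of_norm_bounded (fun n => hbound n t hts)
  have hval : (∑' n : ℕ, c k n * (↑n * t ^ (n-1))) = S (k+1) t := by
    rw [hsum.tsum_eq_zero_add]
    simp only [Nat.cast_zero, zero_mul, mul_zero, zero_add]
    unfold S
    apply tsum_congr
    intro n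
    have hc := c_succ_mul k n
    push_cast
    push_cast at hc
    linear_combination t ^ n * hc
  rw [hval] at H
  exact H

lemma contDiff_S (k : ℕ) : ContDiff ℝ (⊤ : ℕ∞) (S k) := by
  refine ContDiff.of_le ?_ le_top
  rw [contDiff_omega_iff_analyticOnNhd]
  have hrad : (ofScalars ℝ (c k)).radius = ⊤ := by
    apply radius_eq_top_of_summable_norm
    intro r
    apply Summable.of_nonneg_of_le (fun n => by positivity)
      (fun n => ?_) (Real.summable_pow_div_factorial r)
    have hnorm : ‖ofScalars ℝ (c k) n‖ = |c k n| := by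
      rw [ofScalars_norm, Real.norm_eq_abs]
    rw [hnorm, div_eq_mul_one_div ((r:ℝ)^n), mul_comm ((r:ℝ)^n)]
    exact mul_le_mul_of_nonneg_right (abs_c_le k n) (by positivity)
  have hball : HasFPowerSeriesOnBall (S k) (ofScalars ℝ (c k)) 0 ⊤ := by
    have h := (ofScalars ℝ (c k)).hasFPowerSeriesOnBall (by rw [hrad]; exact ENNReal.zero_lt_top)
    rw [hrad] at h
    have : (ofScalars ℝ (c k)).sum = S k := by
      funext x
      rw [FormalMultilinearSeries.sum, S]
      exact tsum_congr fun n => by rw [ofScalars_apply_eq]; simp [smul_eq_mul]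
    rwa [this] at h
  intro x _
  exact hball.analyticAt_of_mem (by simp)

lemma S_ode (t : ℝ) : S 1 t = 2 * S 2 t + t * S 3 t := by
  have h3 : Summable (fun m : ℕ => c 3 m * t ^ (m+1)) := by
    have := (summable_c 3 t).mul_right t
    apply this.congr
    intro m
    rw [pow_succ]; ring
  have key : S 1 t - 2 * S 2 t = t * S 3 t := by
    unfold S
    rw [← tsum_mul_left, ← tsum_mul_left, ← Summable.tsum_sub (summable_c 1 t) ((summable_c 2 t).mul_left 2)]
    have h2 : (∑' m : ℕ, t * (c 3 m * t ^ m)) = ∑' m : ℕ, c 3 m * t ^ (m+1) :=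
      tsum_congr fun m => by rw [pow_succ]; ring
    rw [h2]
    have hsum : Summable (fun m : ℕ => c 1 m * t ^ m - 2 * (c 2 m * t ^ m)) :=
      (summable_c 1 t).sub ((summable_c 2 t).mul_left 2)
    rw [hsum.tsum_eq_zero_add]
    have hz : c 1 0 * t ^ 0 - 2 * (c 2 0 * t ^ 0) = 0 := by
      unfold c; norm_num [Nat.factorial]
    rw [hz, zero_add]
    apply tsum_congr
    intro m
    have hcoef : c 1 (m+1) - 2 * c 2 (m+1) = c 3 m := by
      unfold c
      have e1 : m + 1 + 1 = m + 2 := by omega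
      have e2 : m + 1 + 2 = m + 3 := by omega
      have e3 : m + 3 = (m+2) + 1 := by omega
      rw [e1, e2, e3, Nat.factorial_succ (m+2), Nat.factorial_succ (m+1), Nat.factorial_succ m]
      have hm : ((m.factorial : ℝ)) ≠ 0 := by exact_mod_cast m.factorial_pos.ne'
      push_cast
      field_simp
      ring
    rw [← hcoef]
    ring
  linarith

lemma Kker_eq (γ x y : ℝ) : Kker γ x y = -γ * y * S 1 (γ * (x^2 - y^2) / 4) := by
  unfold Kker S
  congr 1
  apply tsum_congr
  intro m
  unfold c
  ring

end St11

open St11 in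
/-- direct backstepping kernel verification: `K` is smooth and satisfies
`K_xx − K_yy = γ K`, `K(x,0) = 0` and `K(x,x) = −γx/2`. -/
theorem statement_11 (γ : ℝ) :
    ContDiff ℝ (⊤ : ℕ∞) (fun p : ℝ × ℝ => Kker γ p.1 p.2) ∧
    (∀ x y : ℝ,
      deriv (deriv (fun x' => Kker γ x' y)) x - deriv (deriv (fun y' => Kker γ x y')) y
        = γ * Kker γ x y) ∧
    (∀ x : ℝ, Kker γ x 0 = 0) ∧
    (∀ x : ℝ, Kker γ x x = -γ * x / 2) := by
  refine ⟨?_, ?_, ?_, ?_⟩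
  · -- smoothness
    have heq : (fun p : ℝ × ℝ => Kker γ p.1 p.2)
        = fun p : ℝ × ℝ => -γ * p.2 * S 1 (γ * (p.1^2 - p.2^2) / 4) :=
      funext fun p => Kker_eq γ p.1 p.2
    rw [heq]
    have hinner : ContDiff ℝ (⊤ : ℕ∞) (fun p : ℝ × ℝ => γ * (p.1^2 - p.2^2) / 4) :=
      (contDiff_const.mul ((contDiff_fst.pow 2).sub (contDiff_snd.pow 2))).div_const 4
    exact (contDiff_const.mul contDiff_snd).mul ((contDiff_S 1).comp hinner)
  · -- the PDE
    intro x y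
    -- inner derivatives
    have hinx : ∀ x' : ℝ, HasDerivAt (fun z : ℝ => γ * (z^2 - y^2) / 4) (γ * x' / 2) x' := by
      intro x'
      have h := ((hasDerivAt_pow 2 x').sub_const (y^2)).const_mul (γ/4)
      have hf : (fun z : ℝ => γ/4 * (z^2 - y^2)) = (fun z => γ * (z^2 - y^2) / 4) := by
        funext z; ring
      rw [hf] at h
      exact h.congr_deriv (by rw [show (2:ℕ) - 1 = 1 from rfl]; push_cast; ring)
    have hiny : ∀ y' : ℝ, HasDerivAt (fun w : ℝ => γ * (x^2 - w^2) / 4) (-(γ * y' / 2)) y' := by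
      intro y'
      have h := ((hasDerivAt_pow 2 y').const_sub (x^2)).const_mul (γ/4)
      have hf : (fun w : ℝ => γ/4 * (x^2 - w^2)) = (fun w => γ * (x^2 - w^2) / 4) := by
        funext w; ring
      rw [hf] at h
      exact h.congr_deriv (by rw [show (2:ℕ) - 1 = 1 from rfl]; push_cast; ring)
    have hlinx : ∀ x' : ℝ, HasDerivAt (fun z : ℝ => γ * z / 2) (γ / 2) x' := by
      intro x'
      have h := (hasDerivAt_id x').const_mul (γ/2)
      have hf : (fun z : ℝ => γ/2 * id z) = (fun z => γ * z / 2) := by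
        funext z; simp [id]; ring
      rw [hf] at h
      simpa using h
    have hnegy : ∀ y' : ℝ, HasDerivAt (fun w : ℝ => -(γ * w / 2)) (-(γ / 2)) y' := by
      intro y'
      exact (hlinx y').neg
    have hliny : ∀ y' : ℝ, HasDerivAt (fun w : ℝ => -γ * w) (-γ) y' := by
      intro y'
      have h := (hasDerivAt_id y').const_mul (-γ)
      simpa using h
    -- first x-derivative
    have hKx : deriv (fun z => Kker γ z y)
        = fun z => -γ * y * (S 2 (γ * (z^2 - y^2) / 4) * (γ * z / 2)) := by
      funext z
      have h := (((hasDerivAt_S 1 (γ * (z^2 - y^2) / 4)).comp z (hinx z)).const_mul (-γ * y))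
      have hfun : (fun w => -γ * y * ((S 1) ∘ fun z : ℝ => γ * (z^2 - y^2) / 4) w)
          = fun w => Kker γ w y := by
        funext w
        rw [Kker_eq]
        rfl
      rw [hfun] at h
      exact h.deriv
    -- second x-derivative
    have h2x : deriv (deriv (fun z => Kker γ z y)) x
        = -γ * y * ((S 3 (γ * (x^2 - y^2) / 4) * (γ * x / 2)) * (γ * x / 2)
            + S 2 (γ * (x^2 - y^2) / 4) * (γ / 2)) := by
      rw [hKx]
      have hS2 : HasDerivAt (fun z => S 2 (γ * (z^2 - y^2) / 4))
          (S 3 (γ * (x^2 - y^2) / 4) * (γ * x / 2)) x :=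
        by have := (hasDerivAt_S 2 (γ * (x^2 - y^2) / 4)).comp x (hinx x); exact this
      exact ((hS2.mul (hlinx x)).const_mul (-γ * y)).deriv
    -- first y-derivative
    have hKy : deriv (fun w => Kker γ x w)
        = fun w => -γ * S 1 (γ * (x^2 - w^2) / 4)
            + -γ * w * (S 2 (γ * (x^2 - w^2) / 4) * -(γ * w / 2)) := by
      funext w
      have hS1 : HasDerivAt (fun v => S 1 (γ * (x^2 - v^2) / 4))
          (S 2 (γ * (x^2 - w^2) / 4) * -(γ * w / 2)) w :=
        by have := (hasDerivAt_S 1 (γ * (x^2 - w^2) / 4)).comp w (hiny w); exact this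
      have h := (hliny w).mul hS1
      have hfun : (fun v => -γ * v * S 1 (γ * (x^2 - v^2) / 4)) = fun v => Kker γ x v := by
        funext v
        rw [Kker_eq]
      rw [← hfun]
      exact h.deriv
    -- second y-derivative
    have h2y : deriv (deriv (fun w => Kker γ x w)) y
        = -γ * (S 2 (γ * (x^2 - y^2) / 4) * -(γ * y / 2))
          + (-γ * (S 2 (γ * (x^2 - y^2) / 4) * -(γ * y / 2))
            + -γ * y * ((S 3 (γ * (x^2 - y^2) / 4) * -(γ * y / 2)) * -(γ * y / 2)
              + S 2 (γ * (x^2 - y^2) / 4) * -(γ / 2))) := by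
      rw [hKy]
      have hS1' : HasDerivAt (fun w => S 1 (γ * (x^2 - w^2) / 4))
          (S 2 (γ * (x^2 - y^2) / 4) * -(γ * y / 2)) y :=
        by have := (hasDerivAt_S 1 (γ * (x^2 - y^2) / 4)).comp y (hiny y); exact this
      have hS2' : HasDerivAt (fun w => S 2 (γ * (x^2 - w^2) / 4))
          (S 3 (γ * (x^2 - y^2) / 4) * -(γ * y / 2)) y :=
        by have := (hasDerivAt_S 2 (γ * (x^2 - y^2) / 4)).comp y (hiny y); exact this
      have hnegy' : HasDerivAt (fun w : ℝ => -(γ * w / 2)) (-(γ / 2)) y := hnegy y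
      exact ((hS1'.const_mul (-γ)).add ((hliny y).mul (hS2'.mul hnegy'))).deriv
    rw [h2x, h2y, Kker_eq, S_ode (γ * (x^2 - y^2) / 4)]
    ring
  · intro x
    simp [Kker]
  · intro x
    have h : γ * (x^2 - x^2) / 4 = 0 := by ring
    rw [Kker_eq, h]
    have hS : S 1 0 = 1/2 := by
      unfold S
      rw [tsum_eq_single 0 (fun m hm => by simp [zero_pow hm])]
      unfold c
      norm_num [Nat.factorial]
    rw [hS]; ring
end

section
/- The backstepping transformation maps the plant into the target system: Let θ > 0, λ ∈ ℝ, c ≥ 0, and let K ∈ C²({(x,y) : 0 ≤ y ≤ x ≤ 1}) satisfy θ·(K_xx − K_yy) = (λ+c)·K on {0 ≤ y ≤ x ≤ 1}, K(x,x) = −((λ+c)/(2θ))·x and K(x,0) = 0 for all x ∈ [0,1]. Let a < b and suppose u : (a,b) × [0,1] → ℝ is continuously differentiable with u(t,·) ∈ C²([0,1]) for each t ∈ (a,b), satisfies u_t = θ·u_xx + λ·u on (a,b) × (0,1), and u(t,0) = 0 for all t ∈ (a,b). Define w(t,x) = u(t,x) − ∫₀ˣ K(x,y)·u(t,y) dy.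 Then for all t ∈ (a,b): w_t(t,x) = θ·w_xx(t,x) − c·w(t,x) for all x ∈ (0,1), w(t,0) = 0, and w(t,1) = u(t,1) − ∫₀¹ K(1,y)·u(t,y) dy. -/
/-!
Write `w = u − ∫₀ˣ K(x,y) u(y) dy`. Differentiating under the integral in `t` and using the plant
equation gives `w_t = θu_xx + λu − ∫₀ˣ K (θu_yy + λu)`, while the Leibniz rule gives
`w_xx = u_xx − (d/dx K(x,x)) u − K(x,x) u_x − K_x(x,x) u − ∫₀ˣ K_xx u`. Integrating `∫₀ˣ K u_yy`
by parts twice, the terms at `y = 0` vanish by `u(0) = 0` and `K(x,0) = 0`, the remaining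
integral is `∫₀ˣ θ(K_xx − K_yy) u = (λ+c) ∫₀ˣ K u`, and the point terms at `x` cancel because
`K_x(x,x) + K_y(x,x) = d/dx K(x,x) = −(λ+c)/(2θ)`.

Since `K` is only `C²` on the triangle `0 ≤ y ≤ x ≤ 1`, the Leibniz rule is proved after the
substitution `y = x s`, which moves the variable domain of integration to `[0, 1]`.
-/

open Set Filter MeasureTheory Metric Topology Function
open scoped Interval

theorem ContDiffOn.hasDerivAt_derivWithin_Icc {f : ℝ → ℝ} {a b : ℝ} {n : WithTop ℕ∞}
    (hf : ContDiffOn ℝ n f (Icc a b)) (hn : n ≠ 0) {y : ℝ} (hy : y ∈ Ioo a b) :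
    HasDerivAt f (derivWithin f (Icc a b) y) y :=
  (hf.differentiableOn hn y (Ioo_subset_Icc_self hy)).hasDerivWithinAt.hasDerivAt
    (Icc_mem_nhds hy.1 hy.2)

theorem ContDiffOn.deriv_deriv_eq_derivWithin_Icc {f : ℝ → ℝ} {a b : ℝ}
    (hf : ContDiffOn ℝ 2 f (Icc a b)) {y : ℝ} (hy : y ∈ Ioo a b) :
    deriv (deriv f) y = derivWithin (derivWithin f (Icc a b)) (Icc a b) y := by
  have h : deriv f =ᶠ[𝓝 y] derivWithin f (Icc a b) := by
    filter_upwards [isOpen_Ioo.mem_nhds hy] with z hz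
    exact (hf.hasDerivAt_derivWithin_Icc two_ne_zero hz).deriv
  rw [h.deriv_eq]
  exact ((hf.derivWithin (uniqueDiffOn_Icc (hy.1.trans hy.2)) (m := 1) (by norm_num))
    |>.hasDerivAt_derivWithin_Icc one_ne_zero hy).deriv

theorem integral_mul_deriv_deriv_sub_eq {a b : ℝ} (hab : a ≤ b) {f f' f'' g g' g'' : ℝ → ℝ}
    (hf : ContinuousOn f (Icc a b)) (hf' : ContinuousOn f' (Icc a b))
    (hf'' : ContinuousOn f'' (Icc a b)) (hg : ContinuousOn g (Icc a b))
    (hg' : ContinuousOn g' (Icc a b)) (hg'' : ContinuousOn g'' (Icc a b))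
    (hff' : ∀ y ∈ Ioo a b, HasDerivAt f (f' y) y) (hf'f'' : ∀ y ∈ Ioo a b, HasDerivAt f' (f'' y) y)
    (hgg' : ∀ y ∈ Ioo a b, HasDerivAt g (g' y) y)
    (hg'g'' : ∀ y ∈ Ioo a b, HasDerivAt g' (g'' y) y) :
    ∫ y in a..b, (f y * g'' y - f'' y * g y)
      = f b * g' b - f' b * g b - (f a * g' a - f' a * g a) :=
  intervalIntegral.integral_eq_sub_of_hasDerivAt_of_le hab ((hf.mul hg').sub (hf'.mul hg))
    (fun y hy => (((hff' y hy).mul (hg'g'' y hy)).sub ((hf'f'' y hy).mul (hgg' y hy))).congr_deriv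
      (by ring))
    (((hf.mul hg'').sub (hf''.mul hg)).intervalIntegrable_of_Icc hab)

theorem hasDerivAt_intervalIntegral_of_continuousOn {F F' : ℝ → ℝ → ℝ} {x₀ δ α β : ℝ}
    (hδ : 0 < δ) (hαβ : α ≤ β) (hF : ∀ x ∈ ball x₀ δ, ContinuousOn (F x) (Icc α β))
    (hF' : ContinuousOn (uncurry F') (closedBall x₀ δ ×ˢ Icc α β))
    (hderiv : ∀ x ∈ ball x₀ δ, ∀ y ∈ Ioo α β, HasDerivAt (F · y) (F' x y) x) :
    HasDerivAt (fun x => ∫ y in α..β, F x y) (∫ y in α..β, F' x₀ y) x₀ := by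
  obtain ⟨M, hM⟩ :=
    (isCompact_closedBall x₀ δ).prod isCompact_Icc |>.exists_bound_of_continuousOn hF'
  have hx₀ : x₀ ∈ ball x₀ δ := mem_ball_self hδ
  have hΙ : Ι α β ⊆ Icc α β := by rw [uIoc_of_le hαβ]; exact Ioc_subset_Icc_self
  have hF'x₀ : ContinuousOn (F' x₀) (Icc α β) :=
    hF'.comp (f := fun y => (x₀, y)) (Continuous.continuousOn (by fun_prop))
      fun _ hy => ⟨ball_subset_closedBall hx₀, hy⟩
  refine (intervalIntegral.hasDerivAt_integral_of_dominated_loc_of_deriv_le (bound := fun _ => M)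
    (ball_mem_nhds x₀ hδ) ?_ ((hF x₀ hx₀).intervalIntegrable_of_Icc hαβ)
    ((hF'x₀.mono hΙ).aestronglyMeasurable measurableSet_uIoc) ?_ intervalIntegrable_const ?_).2
  · filter_upwards [ball_mem_nhds x₀ hδ] with x hx
    exact ((hF x hx).mono hΙ).aestronglyMeasurable measurableSet_uIoc
  · exact ae_of_all _ fun y hy x hx => hM (x, y) ⟨ball_subset_closedBall hx, hΙ hy⟩
  · filter_upwards [volume.ae_ne β] with y hyβ hy x hx
    rw [uIoc_of_le hαβ] at hy
    exact hderiv x hx y ⟨hy.1, lt_of_le_of_ne hy.2 hyβ⟩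

theorem intervalIntegral.integral_eq_integral_unit_comp_mul (f : ℝ → ℝ) (x : ℝ) :
    ∫ y in (0:ℝ)..x, f y = ∫ s in (0:ℝ)..1, x * f (x * s) := by
  rw [intervalIntegral.integral_const_mul, ← smul_eq_mul, smul_integral_comp_mul_left, mul_zero,
    mul_one]

theorem ContDiffOn.hasFDerivAt_fderivWithin {E : Type*} [NormedAddCommGroup E] [NormedSpace ℝ E]
    {G : E → ℝ} {t : Set E} {p : E} (hG : ContDiffOn ℝ 1 G t) (ht : t ∈ 𝓝 p) :
    HasFDerivAt G (fderivWithin ℝ G t p) p :=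
  (hG.differentiableOn one_ne_zero p (mem_of_mem_nhds ht)).hasFDerivWithinAt.hasFDerivAt ht

def triangle : Set (ℝ × ℝ) := {p | 0 ≤ p.2 ∧ p.2 ≤ p.1 ∧ p.1 ≤ 1}

theorem convex_triangle : Convex ℝ triangle := by
  rintro p ⟨hp₁, hp₂, hp₃⟩ q ⟨hq₁, hq₂, hq₃⟩ s r hs hr hsr
  refine ⟨by simp only [Prod.snd_add, Prod.smul_snd, smul_eq_mul]; positivity, ?_, ?_⟩ <;>
    simp only [Prod.snd_add, Prod.fst_add, Prod.smul_snd, Prod.smul_fst, smul_eq_mul]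
  · nlinarith [mul_le_mul_of_nonneg_left hp₂ hs, mul_le_mul_of_nonneg_left hq₂ hr]
  · nlinarith [mul_le_mul_of_nonneg_left hp₃ hs, mul_le_mul_of_nonneg_left hq₃ hr]

theorem triangle_mem_nhds {x y : ℝ} (hy : 0 < y) (hyx : y < x) (hx : x < 1) :
    triangle ∈ 𝓝 (x, y) := by
  have hU : IsOpen {p : ℝ × ℝ | 0 < p.2 ∧ p.2 < p.1 ∧ p.1 < 1} :=
    (isOpen_lt continuous_const continuous_snd).inter
      ((isOpen_lt continuous_snd continuous_fst).inter (isOpen_lt continuous_fst continuous_const))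
  exact mem_of_superset (hU.mem_nhds ⟨hy, hyx, hx⟩) fun p ⟨h₁, h₂, h₃⟩ => ⟨h₁.le, h₂.le, h₃.le⟩

theorem uniqueDiffOn_triangle : UniqueDiffOn ℝ triangle :=
  uniqueDiffOn_convex convex_triangle
    ⟨(3 / 4, 1 / 4), mem_interior_iff_mem_nhds.2
      (triangle_mem_nhds (by norm_num) (by norm_num) (by norm_num))⟩

theorem ContinuousOn.slice_triangle {F : ℝ × ℝ → ℝ} (hF : ContinuousOn F triangle) {x : ℝ}
    (hx : x ≤ 1) : ContinuousOn (fun y => F (x, y)) (Icc 0 x) :=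
  hF.comp (Continuous.continuousOn (by fun_prop)) fun _ hy => ⟨hy.1, hy.2, hx⟩

/-- Partial derivatives within `s`: on the triangle they make sense, and are continuous, up to the
boundary, where the kernel is only differentiable from one side. -/
noncomputable def partialFst (s : Set (ℝ × ℝ)) (F : ℝ × ℝ → ℝ) (p : ℝ × ℝ) : ℝ :=
  fderivWithin ℝ F s p (1, 0)

noncomputable def partialSnd (s : Set (ℝ × ℝ)) (F : ℝ × ℝ → ℝ) (p : ℝ × ℝ) : ℝ :=
  fderivWithin ℝ F s p (0, 1)

section Partial

variable {s : Set (ℝ × ℝ)} {F : ℝ × ℝ → ℝ}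

theorem fderivWithin_apply_eq_partial (p : ℝ × ℝ) (a b : ℝ) :
    fderivWithin ℝ F s p (a, b) = a * partialFst s F p + b * partialSnd s F p := by
  have hab : ((a, b) : ℝ × ℝ) = a • (1, 0) + b • (0, 1) := by ext <;> simp
  rw [hab, map_add, map_smul, map_smul]
  rfl

theorem ContDiffOn.partialFst {m n : WithTop ℕ∞} (hF : ContDiffOn ℝ n F s) (hs : UniqueDiffOn ℝ s)
    (hmn : m + 1 ≤ n) : ContDiffOn ℝ m (partialFst s F) s :=
  (hF.fderivWithin hs hmn).clm_apply contDiffOn_const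

theorem ContDiffOn.partialSnd {m n : WithTop ℕ∞} (hF : ContDiffOn ℝ n F s) (hs : UniqueDiffOn ℝ s)
    (hmn : m + 1 ≤ n) : ContDiffOn ℝ m (partialSnd s F) s :=
  (hF.fderivWithin hs hmn).clm_apply contDiffOn_const

theorem hasDerivAt_partialFst {x y : ℝ} (hF : DifferentiableWithinAt ℝ F s (x, y))
    (hmem : ∀ᶠ z in 𝓝 x, (z, y) ∈ s) : HasDerivAt (fun z => F (z, y)) (partialFst s F (x, y)) x :=
  hF.hasFDerivWithinAt.comp_hasDerivAt (f := fun z => (z, y)) x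
    ((hasDerivAt_id x).prodMk (hasDerivAt_const x y)) hmem

theorem hasDerivAt_partialSnd {x y : ℝ} (hF : DifferentiableWithinAt ℝ F s (x, y))
    (hmem : ∀ᶠ z in 𝓝 y, (x, z) ∈ s) : HasDerivAt (fun z => F (x, z)) (partialSnd s F (x, y)) y :=
  hF.hasFDerivWithinAt.comp_hasDerivAt (f := fun z => (x, z)) y
    ((hasDerivAt_const y x).prodMk (hasDerivAt_id y)) hmem

theorem deriv_deriv_fst_eq_partialFst (hF : ContDiffOn ℝ 2 F s) (hs : UniqueDiffOn ℝ s) {x y : ℝ}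
    (hxy : s ∈ 𝓝 (x, y)) :
    deriv (deriv fun z => F (z, y)) x = partialFst s (partialFst s F) (x, y) := by
  have hslice : Tendsto (fun z => (z, y)) (𝓝 x) (𝓝 (x, y)) :=
    (Continuous.tendsto (by fun_prop) x)
  have hnear : ∀ᶠ z in 𝓝 x, s ∈ 𝓝 (z, y) := hslice.eventually (eventually_mem_nhds_iff.2 hxy)
  have hderiv : deriv (fun z => F (z, y)) =ᶠ[𝓝 x] fun z => partialFst s F (z, y) := by
    filter_upwards [hnear] with z hz
    exact (hasDerivAt_partialFst (hF.differentiableOn (by norm_num) _ (mem_of_mem_nhds hz))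
      ((Continuous.tendsto (by fun_prop) z).eventually hz)).deriv
  rw [hderiv.deriv_eq]
  exact (hasDerivAt_partialFst ((hF.partialFst (m := 1) hs (by norm_num)).differentiableOn
    one_ne_zero _ (mem_of_mem_nhds hxy)) (hslice.eventually hxy)).deriv

theorem deriv_deriv_snd_eq_partialSnd (hF : ContDiffOn ℝ 2 F s) (hs : UniqueDiffOn ℝ s) {x y : ℝ}
    (hxy : s ∈ 𝓝 (x, y)) :
    deriv (deriv fun z => F (x, z)) y = partialSnd s (partialSnd s F) (x, y) := by
  have hslice : Tendsto (fun z => (x, z)) (𝓝 y) (𝓝 (x, y)) :=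
    (Continuous.tendsto (by fun_prop) y)
  have hnear : ∀ᶠ z in 𝓝 y, s ∈ 𝓝 (x, z) := hslice.eventually (eventually_mem_nhds_iff.2 hxy)
  have hderiv : deriv (fun z => F (x, z)) =ᶠ[𝓝 y] fun z => partialSnd s F (x, z) := by
    filter_upwards [hnear] with z hz
    exact (hasDerivAt_partialSnd (hF.differentiableOn (by norm_num) _ (mem_of_mem_nhds hz))
      ((Continuous.tendsto (by fun_prop) z).eventually hz)).deriv
  rw [hderiv.deriv_eq]
  exact (hasDerivAt_partialSnd ((hF.partialSnd (m := 1) hs (by norm_num)).differentiableOn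
    one_ne_zero _ (mem_of_mem_nhds hxy)) (hslice.eventually hxy)).deriv

end Partial

theorem mk_mul_mem_triangle {x s : ℝ} (hx : x ∈ Icc (0:ℝ) 1) (hs : s ∈ Icc (0:ℝ) 1) :
    (x, x * s) ∈ triangle :=
  ⟨mul_nonneg hx.1 hs.1, mul_le_of_le_one_right hx.1 hs.2, hx.2⟩

theorem triangle_mem_nhds_mk_mul {x s : ℝ} (hx : x ∈ Ioo (0:ℝ) 1) (hs : s ∈ Ioo (0:ℝ) 1) :
    triangle ∈ 𝓝 (x, x * s) :=
  triangle_mem_nhds (mul_pos hx.1 hs.1) (mul_lt_of_lt_one_right hx.1 hs.2) hx.2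

theorem ContinuousOn.comp_mk_mul {G : ℝ × ℝ → ℝ} (hG : ContinuousOn G triangle) :
    ContinuousOn (fun p : ℝ × ℝ => G (p.1, p.1 * p.2)) (Icc 0 1 ×ˢ Icc 0 1) :=
  hG.comp (Continuous.continuousOn (by fun_prop)) fun _ hp => mk_mul_mem_triangle hp.1 hp.2

theorem ContinuousOn.comp_mk_mul_slice {G : ℝ × ℝ → ℝ} (hG : ContinuousOn G triangle) {x : ℝ}
    (hx : x ∈ Icc (0:ℝ) 1) : ContinuousOn (fun s => G (x, x * s)) (Icc 0 1) :=
  hG.comp_mk_mul.comp (f := fun s => (x, s)) (Continuous.continuousOn (by fun_prop))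
    fun _ hs => ⟨hx, hs⟩

/-- After the substitution `y = x s`, the `∂₂F` part of `∂ₓ (x F(x, x s))` is `∂ₛ (s F(x, x s))`,
so it integrates to the diagonal value `F(x, x)`. -/
theorem integral_deriv_rescaled_eq {F : ℝ × ℝ → ℝ} (hF : ContDiffOn ℝ 1 F triangle) {x : ℝ}
    (hx : x ∈ Ioo (0:ℝ) 1) :
    ∫ s in (0:ℝ)..1, (F (x, x * s)
        + x * (partialFst triangle F (x, x * s) + s * partialSnd triangle F (x, x * s)))
      = F (x, x) + ∫ y in (0:ℝ)..x, partialFst triangle F (x, y) := by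
  have hxI := Ioo_subset_Icc_self hx
  have hF₀ := hF.continuousOn.comp_mk_mul_slice hxI
  have hF₁ := (hF.partialFst uniqueDiffOn_triangle (m := 0) (by norm_num)).continuousOn
    |>.comp_mk_mul_slice hxI
  have hF₂ := (hF.partialSnd uniqueDiffOn_triangle (m := 0) (by norm_num)).continuousOn
    |>.comp_mk_mul_slice hxI
  have hderiv : ∀ s ∈ Ioo (0:ℝ) 1, HasDerivAt (fun s => s * F (x, x * s))
      (F (x, x * s) + s * (x * partialSnd triangle F (x, x * s))) s := by
    intro s hs
    have h := (hF.hasFDerivAt_fderivWithin (triangle_mem_nhds_mk_mul hx hs)).comp_hasDerivAt s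
      ((hasDerivAt_const s x).prodMk ((hasDerivAt_id' s).const_mul x))
    rw [fderivWithin_apply_eq_partial] at h
    exact ((hasDerivAt_id' s).mul h).congr_deriv (by simp only [comp_apply]; ring)
  have hint : IntervalIntegrable
      (fun s => F (x, x * s) + s * (x * partialSnd triangle F (x, x * s))) volume 0 1 :=
    (hF₀.add (continuousOn_id.mul (continuousOn_const.mul hF₂))).intervalIntegrable_of_Icc
      zero_le_one
  have hdiag : ∫ s in (0:ℝ)..1, (F (x, x * s) + s * (x * partialSnd triangle F (x, x * s)))
      = F (x, x) := by
    rw [intervalIntegral.integral_eq_sub_of_hasDerivAt_of_le zero_le_one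
      (continuousOn_id.mul hF₀) hderiv hint]
    simp
  rw [intervalIntegral.integral_eq_integral_unit_comp_mul (fun y => partialFst triangle F (x, y)),
    ← hdiag, ← intervalIntegral.integral_add hint
      ((continuousOn_const.fun_mul hF₁).intervalIntegrable_of_Icc zero_le_one)]
  exact intervalIntegral.integral_congr fun s _ => by ring

theorem hasDerivAt_integral_triangle {F : ℝ × ℝ → ℝ} (hF : ContDiffOn ℝ 1 F triangle) {x : ℝ}
    (hx : x ∈ Ioo (0:ℝ) 1) :
    HasDerivAt (fun z => ∫ y in (0:ℝ)..z, F (z, y))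
      (F (x, x) + ∫ y in (0:ℝ)..x, partialFst triangle F (x, y)) x := by
  obtain ⟨δ, hδ, hball⟩ : ∃ δ > 0, closedBall x δ ⊆ Ioo 0 1 :=
    nhds_basis_closedBall.mem_iff.1 (isOpen_Ioo.mem_nhds hx)
  have hballI : closedBall x δ ⊆ Icc 0 1 := hball.trans Ioo_subset_Icc_self
  have hcont : ∀ {G : ℝ × ℝ → ℝ}, ContinuousOn G triangle →
      ContinuousOn (fun p : ℝ × ℝ => G (p.1, p.1 * p.2)) (closedBall x δ ×ˢ Icc 0 1) :=
    fun hG => hG.comp_mk_mul.mono (prod_mono hballI subset_rfl)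
  rw [← integral_deriv_rescaled_eq hF hx,
    funext fun z => intervalIntegral.integral_eq_integral_unit_comp_mul (fun y => F (z, y)) z]
  refine hasDerivAt_intervalIntegral_of_continuousOn hδ zero_le_one (F' := fun z s => F (z, z * s)
      + z * (partialFst triangle F (z, z * s) + s * partialSnd triangle F (z, z * s)))
    (fun z hz => continuousOn_const.mul (hF.continuousOn.comp_mk_mul_slice
      (hballI (ball_subset_closedBall hz))))
    ((hcont hF.continuousOn).add (continuousOn_fst.mul
      ((hcont (hF.partialFst uniqueDiffOn_triangle (m := 0) (by norm_num)).continuousOn).add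
        (continuousOn_snd.mul
          (hcont (hF.partialSnd uniqueDiffOn_triangle (m := 0) (by norm_num)).continuousOn)))))
    fun z hz s hs => ?_
  have hz := hball (ball_subset_closedBall hz)
  have h := (hF.hasFDerivAt_fderivWithin (triangle_mem_nhds_mk_mul hz hs)).comp_hasDerivAt z
    ((hasDerivAt_id z).prodMk ((hasDerivAt_id z).mul_const s))
  rw [fderivWithin_apply_eq_partial] at h
  exact ((hasDerivAt_id' z).mul h).congr_deriv (by simp)

theorem hasDerivAt_integral_triangle_mul {G : ℝ × ℝ → ℝ} (hG : ContDiffOn ℝ 1 G triangle)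
    {v : ℝ → ℝ} (hv : ContDiffOn ℝ 1 v (Icc 0 1)) {x : ℝ} (hx : x ∈ Ioo (0:ℝ) 1) :
    HasDerivAt (fun z => ∫ y in (0:ℝ)..z, G (z, y) * v y)
      (G (x, x) * v x + ∫ y in (0:ℝ)..x, partialFst triangle G (x, y) * v y) x := by
  have hGv : ContDiffOn ℝ 1 (fun p : ℝ × ℝ => G p * v p.2) triangle :=
    hG.mul (hv.comp contDiffOn_snd fun p hp => ⟨hp.1, hp.2.1.trans hp.2.2⟩)
  convert hasDerivAt_integral_triangle hGv hx using 2
  refine intervalIntegral.integral_congr_Ioo_of_le hx.1.le fun y hy => ?_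
  have hxy := triangle_mem_nhds hy.1 hy.2 hx.2
  have hnear : ∀ᶠ z in 𝓝 x, (z, y) ∈ triangle :=
    (continuousAt_id.prodMk continuousAt_const).eventually_mem hxy
  exact ((hasDerivAt_partialFst (hG.differentiableOn one_ne_zero _ (mem_of_mem_nhds hxy))
    hnear).mul_const (v y)).unique
    (hasDerivAt_partialFst (hGv.differentiableOn one_ne_zero _ (mem_of_mem_nhds hxy)) hnear)

theorem partialFst_add_partialSnd_of_diag {F : ℝ × ℝ → ℝ} (hF : ContDiffOn ℝ 1 F triangle)
    {m : ℝ} (hdiag : ∀ z ∈ Icc (0:ℝ) 1, F (z, z) = m * z) {x : ℝ} (hx : x ∈ Ioo (0:ℝ) 1) :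
    partialFst triangle F (x, x) + partialSnd triangle F (x, x) = m := by
  have hnear : ∀ᶠ z in 𝓝 x, z ∈ Icc (0:ℝ) 1 := Icc_mem_nhds hx.1 hx.2
  have h := (hF.differentiableOn one_ne_zero _ ⟨hx.1.le, le_rfl, hx.2.le⟩).hasFDerivWithinAt
    |>.comp_hasDerivAt (f := fun z => (z, z)) x ((hasDerivAt_id x).prodMk (hasDerivAt_id x))
      (hnear.mono fun z hz => ⟨hz.1, le_rfl, hz.2⟩)
  rw [fderivWithin_apply_eq_partial] at h
  have hlin : HasDerivAt (fun z => F (z, z)) m x :=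
    (((hasDerivAt_id' x).const_mul m).congr_deriv (mul_one m)).congr_of_eventuallyEq
      (hnear.mono hdiag)
  simpa using h.unique hlin

theorem hasDerivAt_integral_mul_of_contDiffOn {u : ℝ → ℝ → ℝ} {a b t x : ℝ}
    (hu : ContDiffOn ℝ 1 (uncurry u) (Ioo a b ×ˢ Icc 0 1)) (ht : t ∈ Ioo a b)
    (hx : x ∈ Icc (0:ℝ) 1) {k : ℝ → ℝ} (hk : ContinuousOn k (Icc 0 x)) :
    HasDerivAt (fun s => ∫ y in (0:ℝ)..x, k y * u s y)
      (∫ y in (0:ℝ)..x, k y * partialFst (Ioo a b ×ˢ Icc 0 1) (uncurry u) (t, y)) t := by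
  obtain ⟨δ, hδ, hball⟩ : ∃ δ > 0, closedBall t δ ⊆ Ioo a b :=
    nhds_basis_closedBall.mem_iff.1 (isOpen_Ioo.mem_nhds ht)
  have hsub : Icc 0 x ⊆ Icc (0:ℝ) 1 := Icc_subset_Icc le_rfl hx.2
  have hP : UniqueDiffOn ℝ (Ioo a b ×ˢ Icc (0:ℝ) 1) :=
    isOpen_Ioo.uniqueDiffOn.prod (uniqueDiffOn_Icc zero_lt_one)
  refine hasDerivAt_intervalIntegral_of_continuousOn
    (F' := fun s y => k y * partialFst (Ioo a b ×ˢ Icc 0 1) (uncurry u) (s, y)) hδ hx.1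
    (fun s hs => hk.mul (hu.continuousOn.comp (f := fun y => (s, y))
      (Continuous.continuousOn (by fun_prop))
      fun y hy => ⟨hball (ball_subset_closedBall hs), hsub hy⟩))
    ((hk.comp continuousOn_snd fun p hp => hp.2).mul
      ((hu.partialFst hP (m := 0) (by norm_num)).continuousOn.mono (prod_mono hball hsub)))
    fun s hs y hy => ?_
  have hs := hball (ball_subset_closedBall hs)
  have hy := hsub (Ioo_subset_Icc_self hy)
  exact (hasDerivAt_partialFst (hu.differentiableOn one_ne_zero _ ⟨hs, hy⟩)
    (mem_of_superset (isOpen_Ioo.mem_nhds hs) fun z hz => ⟨hz, hy⟩)).const_mul (k y)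

noncomputable def volterra (K : ℝ → ℝ → ℝ) (v : ℝ → ℝ) (x : ℝ) : ℝ :=
  v x - ∫ y in (0:ℝ)..x, K x y * v y

section Volterra

variable {K : ℝ → ℝ → ℝ}

theorem volterra_congr {f g : ℝ → ℝ} (h : EqOn f g (Ioo 0 1)) {x : ℝ} (hx : x ∈ Ioo (0:ℝ) 1) :
    volterra K f x = volterra K g x := by
  have hint : ∫ y in (0:ℝ)..x, K x y * f y = ∫ y in (0:ℝ)..x, K x y * g y :=
    intervalIntegral.integral_congr_Ioo_of_le hx.1.le fun y hy => by
      rw [h ⟨hy.1, hy.2.trans hx.2⟩]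
  rw [volterra, volterra, h hx, hint]

theorem deriv_volterra_apply {u : ℝ → ℝ → ℝ} {a b t x : ℝ}
    (hu : ContDiffOn ℝ 1 (uncurry u) (Ioo a b ×ˢ Icc 0 1)) (hK : ContinuousOn (uncurry K) triangle)
    (ht : t ∈ Ioo a b) (hx : x ∈ Icc (0:ℝ) 1) :
    deriv (fun s => volterra K (u s) x) t = volterra K (fun y => deriv (fun s => u s y) t) x := by
  have hdt : ∀ y ∈ Icc (0:ℝ) 1,
      HasDerivAt (fun s => u s y) (partialFst (Ioo a b ×ˢ Icc 0 1) (uncurry u) (t, y)) t :=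
    fun y hy => hasDerivAt_partialFst (hu.differentiableOn one_ne_zero _ ⟨ht, hy⟩)
      (mem_of_superset (isOpen_Ioo.mem_nhds ht) fun s hs => ⟨hs, hy⟩)
  refine ((hdt x hx).sub (hasDerivAt_integral_mul_of_contDiffOn hu ht hx
    (hK.slice_triangle hx.2))).deriv.trans ?_
  rw [volterra, (hdt x hx).deriv]
  congr 1
  refine intervalIntegral.integral_congr fun y hy => ?_
  rw [uIcc_of_le hx.1] at hy
  simp only [(hdt y ⟨hy.1, hy.2.trans hx.2⟩).deriv, uncurry_apply_pair]

theorem hasDerivAt_volterra (hK : ContDiffOn ℝ 1 (uncurry K) triangle) {v : ℝ → ℝ}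
    (hv : ContDiffOn ℝ 1 v (Icc 0 1)) {x : ℝ} (hx : x ∈ Ioo (0:ℝ) 1) :
    HasDerivAt (volterra K v) (derivWithin v (Icc 0 1) x
      - (K x x * v x + ∫ y in (0:ℝ)..x, partialFst triangle (uncurry K) (x, y) * v y)) x :=
  (hv.hasDerivAt_derivWithin_Icc one_ne_zero hx).sub (hasDerivAt_integral_triangle_mul hK hv hx)

theorem deriv_deriv_volterra (hK : ContDiffOn ℝ 2 (uncurry K) triangle) {m : ℝ}
    (hdiag : ∀ z ∈ Icc (0:ℝ) 1, K z z = m * z) {v : ℝ → ℝ} (hv : ContDiffOn ℝ 2 v (Icc 0 1))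
    {x : ℝ} (hx : x ∈ Ioo (0:ℝ) 1) :
    deriv (deriv (volterra K v)) x = derivWithin (derivWithin v (Icc 0 1)) (Icc 0 1) x
      - m * v x - m * x * derivWithin v (Icc 0 1) x
      - (partialFst triangle (uncurry K) (x, x) * v x
        + ∫ y in (0:ℝ)..x, partialFst triangle (partialFst triangle (uncurry K)) (x, y) * v y) := by
  have hv₁ : ContDiffOn ℝ 1 v (Icc 0 1) := hv.of_le (by norm_num)
  have hfirst : deriv (volterra K v) =ᶠ[𝓝 x] fun z => derivWithin v (Icc 0 1) z
      - (m * z * v z + ∫ y in (0:ℝ)..z, partialFst triangle (uncurry K) (z, y) * v y) := by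
    filter_upwards [isOpen_Ioo.mem_nhds hx] with z hz
    rw [(hasDerivAt_volterra (hK.of_le (by norm_num)) hv₁ hz).deriv,
      hdiag z (Ioo_subset_Icc_self hz)]
  have hmul : HasDerivAt (fun z => m * z * v z) (m * v x + m * x * derivWithin v (Icc 0 1) x) x :=
    (((hasDerivAt_id' x).const_mul m).mul
      (hv.hasDerivAt_derivWithin_Icc two_ne_zero hx)).congr_deriv (by ring)
  rw [hfirst.deriv_eq]
  exact (((hv.derivWithin (uniqueDiffOn_Icc zero_lt_one) (m := 1) (by norm_num))
    |>.hasDerivAt_derivWithin_Icc one_ne_zero hx).sub (hmul.add (hasDerivAt_integral_triangle_mul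
      (hK.partialFst uniqueDiffOn_triangle (by norm_num)) hv₁ hx))).deriv.trans (by ring)

theorem integral_kernel_mul_deriv_deriv (hK : ContDiffOn ℝ 2 (uncurry K) triangle) {v : ℝ → ℝ}
    (hv : ContDiffOn ℝ 2 v (Icc 0 1)) (hv0 : v 0 = 0) {x : ℝ} (hx : x ∈ Ioo (0:ℝ) 1)
    (hK0 : K x 0 = 0) :
    ∫ y in (0:ℝ)..x, K x y * derivWithin (derivWithin v (Icc 0 1)) (Icc 0 1) y
      = K x x * derivWithin v (Icc 0 1) x - partialSnd triangle (uncurry K) (x, x) * v x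
        + ∫ y in (0:ℝ)..x, partialSnd triangle (partialSnd triangle (uncurry K)) (x, y) * v y := by
  have hK₂ : ContDiffOn ℝ 1 (partialSnd triangle (uncurry K)) triangle :=
    hK.partialSnd uniqueDiffOn_triangle (by norm_num)
  have hv' : ContDiffOn ℝ 1 (derivWithin v (Icc 0 1)) (Icc 0 1) :=
    hv.derivWithin (uniqueDiffOn_Icc zero_lt_one) (by norm_num)
  have hsub : Icc 0 x ⊆ Icc (0:ℝ) 1 := Icc_subset_Icc le_rfl hx.2.le
  have hsubIoo : Ioo 0 x ⊆ Ioo (0:ℝ) 1 := Ioo_subset_Ioo le_rfl hx.2.le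
  have hslice : ∀ {G : ℝ × ℝ → ℝ}, ContDiffOn ℝ 1 G triangle →
      ∀ y ∈ Ioo 0 x, HasDerivAt (fun z => G (x, z)) (partialSnd triangle G (x, y)) y :=
    fun hG y hy => hasDerivAt_partialSnd
      (hG.differentiableOn one_ne_zero _ ⟨hy.1.le, hy.2.le, hx.2.le⟩)
      ((continuousAt_const.prodMk continuousAt_id).eventually_mem
        (triangle_mem_nhds hy.1 hy.2 hx.2))
  have hK₂₂ := (hK₂.partialSnd uniqueDiffOn_triangle (m := 0) (by norm_num)).continuousOn
    |>.slice_triangle hx.2.le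
  have hv'' := (hv'.continuousOn_derivWithin (uniqueDiffOn_Icc zero_lt_one) le_rfl).mono hsub
  have hgreen := integral_mul_deriv_deriv_sub_eq hx.1.le (hK.continuousOn.slice_triangle hx.2.le)
    (hK₂.continuousOn.slice_triangle hx.2.le) hK₂₂ (hv.continuousOn.mono hsub)
    (hv'.continuousOn.mono hsub) hv'' (hslice (hK.of_le (by norm_num))) (hslice hK₂)
    (fun y hy => hv.hasDerivAt_derivWithin_Icc two_ne_zero (hsubIoo hy))
    (fun y hy => hv'.hasDerivAt_derivWithin_Icc one_ne_zero (hsubIoo hy))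
  rw [intervalIntegral.integral_sub
    (((hK.continuousOn.slice_triangle hx.2.le).fun_mul hv'').intervalIntegrable_of_Icc hx.1.le)
    ((hK₂₂.fun_mul (hv.continuousOn.mono hsub)).intervalIntegrable_of_Icc hx.1.le)] at hgreen
  simp only [uncurry_apply_pair] at hgreen
  rw [hK0, hv0] at hgreen
  linear_combination hgreen

theorem integral_kernel_pde {θ κ : ℝ} (hK : ContDiffOn ℝ 2 (uncurry K) triangle)
    (hKpde : ∀ x y : ℝ, 0 < y → y < x → x < 1 →
      θ * (deriv (deriv fun x' => K x' y) x - deriv (deriv fun y' => K x y') y) = κ * K x y)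
    {v : ℝ → ℝ} (hv : ContinuousOn v (Icc 0 1)) {x : ℝ} (hx : x ∈ Ioo (0:ℝ) 1) :
    θ * ((∫ y in (0:ℝ)..x, partialFst triangle (partialFst triangle (uncurry K)) (x, y) * v y)
      - ∫ y in (0:ℝ)..x, partialSnd triangle (partialSnd triangle (uncurry K)) (x, y) * v y)
      = κ * ∫ y in (0:ℝ)..x, K x y * v y := by
  have hvx : ContinuousOn v (Icc 0 x) := hv.mono (Icc_subset_Icc le_rfl hx.2.le)
  have hK₁₁ := (hK.partialFst uniqueDiffOn_triangle (m := 1) (by norm_num)).partialFst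
    uniqueDiffOn_triangle (m := 0) (by norm_num) |>.continuousOn.slice_triangle hx.2.le
  have hK₂₂ := (hK.partialSnd uniqueDiffOn_triangle (m := 1) (by norm_num)).partialSnd
    uniqueDiffOn_triangle (m := 0) (by norm_num) |>.continuousOn.slice_triangle hx.2.le
  rw [← intervalIntegral.integral_sub ((hK₁₁.fun_mul hvx).intervalIntegrable_of_Icc hx.1.le)
    ((hK₂₂.fun_mul hvx).intervalIntegrable_of_Icc hx.1.le), ← intervalIntegral.integral_const_mul,
    ← intervalIntegral.integral_const_mul]
  refine intervalIntegral.integral_congr_Ioo_of_le hx.1.le fun y hy => ?_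
  have hxy := triangle_mem_nhds hy.1 hy.2 hx.2
  have hpde := hKpde x y hy.1 hy.2 hx.2
  rw [show (fun x' => K x' y) = fun x' => uncurry K (x', y) from rfl,
    show (fun y' => K x y') = fun y' => uncurry K (x, y') from rfl,
    deriv_deriv_fst_eq_partialFst hK uniqueDiffOn_triangle hxy,
    deriv_deriv_snd_eq_partialSnd hK uniqueDiffOn_triangle hxy] at hpde
  linear_combination v y * hpde

theorem volterra_intertwining {θ lam c m : ℝ} (hK : ContDiffOn ℝ 2 (uncurry K) triangle)
    (hKpde : ∀ x y : ℝ, 0 < y → y < x → x < 1 →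
      θ * (deriv (deriv fun x' => K x' y) x - deriv (deriv fun y' => K x y') y) = (lam + c) * K x y)
    (hdiag : ∀ z ∈ Icc (0:ℝ) 1, K z z = m * z) (hm : 2 * θ * m = -(lam + c))
    {v : ℝ → ℝ} (hv : ContDiffOn ℝ 2 v (Icc 0 1)) (hv0 : v 0 = 0) {x : ℝ} (hx : x ∈ Ioo (0:ℝ) 1)
    (hK0 : K x 0 = 0) :
    θ * deriv (deriv (volterra K v)) x - c * volterra K v x
      = volterra K (fun y => θ * deriv (deriv v) y + lam * v y) x := by
  have hsub : Icc 0 x ⊆ Icc (0:ℝ) 1 := Icc_subset_Icc le_rfl hx.2.le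
  have hKx := hK.continuousOn.slice_triangle hx.2.le
  have hv'' := (hv.derivWithin (uniqueDiffOn_Icc zero_lt_one) (m := 1) (by norm_num))
    |>.continuousOn_derivWithin (uniqueDiffOn_Icc zero_lt_one) le_rfl |>.mono hsub
  have hdiag' := partialFst_add_partialSnd_of_diag (hK.of_le (by norm_num)) hdiag hx
  have hcongr : volterra K (fun y => θ * deriv (deriv v) y + lam * v y) x
      = volterra K (fun y => θ * derivWithin (derivWithin v (Icc 0 1)) (Icc 0 1) y + lam * v y) x :=
    volterra_congr (fun y hy => by simp only [hv.deriv_deriv_eq_derivWithin_Icc hy]) hx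
  rw [hcongr, deriv_deriv_volterra hK hdiag hv hx]
  have hKv'' : IntervalIntegrable
      (fun y => θ * (K x y * derivWithin (derivWithin v (Icc 0 1)) (Icc 0 1) y)) volume 0 x :=
    ((hKx.fun_mul hv'').intervalIntegrable_of_Icc hx.1.le).const_mul θ
  have hKv : IntervalIntegrable (fun y => lam * (K x y * v y)) volume 0 x :=
    ((hKx.fun_mul (hv.continuousOn.mono hsub)).intervalIntegrable_of_Icc hx.1.le).const_mul lam
  simp only [volterra, mul_add, mul_left_comm _ θ, mul_left_comm _ lam]
  rw [intervalIntegral.integral_add hKv'' hKv, intervalIntegral.integral_const_mul,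
    intervalIntegral.integral_const_mul, integral_kernel_mul_deriv_deriv hK hv hv0 hx hK0,
    hdiag x (Ioo_subset_Icc_self hx)]
  linear_combination -(integral_kernel_pde hK hKpde hv.continuousOn hx) - θ * v x * hdiag'
    - v x * hm

end Volterra

theorem statement_13_general (θ lam c a b : ℝ) (hθ : 0 < θ)
    (K : ℝ → ℝ → ℝ)
    (hKreg : ContDiffOn ℝ 2 (fun p : ℝ × ℝ => K p.1 p.2)
      {p : ℝ × ℝ | 0 ≤ p.2 ∧ p.2 ≤ p.1 ∧ p.1 ≤ 1})
    (hKpde : ∀ x y : ℝ, 0 ≤ y → y ≤ x → x ≤ 1 →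
      θ * (deriv (deriv (fun x' => K x' y)) x - deriv (deriv (fun y' => K x y')) y)
        = (lam + c) * K x y)
    (hKdiag : ∀ x ∈ Set.Icc (0:ℝ) 1, K x x = -((lam + c)/(2*θ)) * x)
    (hK0 : ∀ x ∈ Set.Icc (0:ℝ) 1, K x 0 = 0)
    (u : ℝ → ℝ → ℝ)
    (hreg : ContDiffOn ℝ 1 (fun p : ℝ × ℝ => u p.1 p.2) (Set.Ioo a b ×ˢ Set.Icc (0:ℝ) 1))
    (hC2 : ∀ t ∈ Set.Ioo a b, ContDiffOn ℝ 2 (u t) (Set.Icc (0:ℝ) 1))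
    (hpde : ∀ t ∈ Set.Ioo a b, ∀ x ∈ Set.Ioo (0:ℝ) 1,
      deriv (fun s => u s x) t = θ * deriv (deriv (u t)) x + lam * u t x)
    (hbc : ∀ t ∈ Set.Ioo a b, u t 0 = 0) :
    ∀ t ∈ Set.Ioo a b,
      (∀ x ∈ Set.Ioo (0:ℝ) 1,
        deriv (fun s => u s x - ∫ y in (0:ℝ)..x, K x y * u s y) t
          = θ * deriv (deriv (fun x' => u t x' - ∫ y in (0:ℝ)..x', K x' y * u t y)) x
            - c * (u t x - ∫ y in (0:ℝ)..x, K x y * u t y)) ∧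
      (u t 0 - ∫ y in (0:ℝ)..(0:ℝ), K 0 y * u t y) = 0 ∧
      (u t 1 - ∫ y in (0:ℝ)..1, K 1 y * u t y)
        = u t 1 - ∫ y in (0:ℝ)..1, K 1 y * u t y := by
  intro t ht
  refine ⟨fun x hx => ?_, by simp [hbc t ht], rfl⟩
  have hm : 2 * θ * -((lam + c) / (2 * θ)) = -(lam + c) := by field_simp
  change deriv (fun s => volterra K (u s) x) t
    = θ * deriv (deriv (volterra K (u t))) x - c * volterra K (u t) x
  rw [deriv_volterra_apply hreg hKreg.continuousOn ht (Ioo_subset_Icc_self hx),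
    volterra_congr (hpde t ht) hx]
  exact (volterra_intertwining hKreg (fun x y hy hyx hx => hKpde x y hy.le hyx.le hx.le) hKdiag hm
    (hC2 t ht) (hbc t ht) hx (hK0 x (Ioo_subset_Icc_self hx))).symm

/-- the backstepping transformation maps the plant into the target
system: if the kernel `K` is `C²` on the triangle and satisfies the kernel PDE
`θ(K_xx − K_yy) = (λ+c)K` with `K(x,x) = −((λ+c)/(2θ))x` and `K(x,0) = 0`, then the
Volterra transform `w(t,x) = u(t,x) − ∫₀ˣ K(x,y)u(t,y) dy` of a classical solution of
`u_t = θu_xx + λu`, `u(t,0)=0`, solves `w_t = θw_xx − cw`, `w(t,0)=0`, with boundary value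
`w(t,1) = u(t,1) − ∫₀¹ K(1,y)u(t,y) dy`. -/
theorem statement_13 (θ lam c a b : ℝ) (hθ : 0 < θ) (hc : 0 ≤ c) (hab : a < b)
    (K : ℝ → ℝ → ℝ)
    (hKreg : ContDiffOn ℝ 2 (fun p : ℝ × ℝ => K p.1 p.2)
      {p : ℝ × ℝ | 0 ≤ p.2 ∧ p.2 ≤ p.1 ∧ p.1 ≤ 1})
    (hKpde : ∀ x y : ℝ, 0 ≤ y → y ≤ x → x ≤ 1 →
      θ * (deriv (deriv (fun x' => K x' y)) x - deriv (deriv (fun y' => K x y')) y)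
        = (lam + c) * K x y)
    (hKdiag : ∀ x ∈ Set.Icc (0:ℝ) 1, K x x = -((lam + c)/(2*θ)) * x)
    (hK0 : ∀ x ∈ Set.Icc (0:ℝ) 1, K x 0 = 0)
    (u : ℝ → ℝ → ℝ)
    (hreg : ContDiffOn ℝ 1 (fun p : ℝ × ℝ => u p.1 p.2) (Set.Ioo a b ×ˢ Set.Icc (0:ℝ) 1))
    (hC2 : ∀ t ∈ Set.Ioo a b, ContDiffOn ℝ 2 (u t) (Set.Icc (0:ℝ) 1))
    (hpde : ∀ t ∈ Set.Ioo a b, ∀ x ∈ Set.Ioo (0:ℝ) 1,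
      deriv (fun s => u s x) t = θ * deriv (deriv (u t)) x + lam * u t x)
    (hbc : ∀ t ∈ Set.Ioo a b, u t 0 = 0) :
    ∀ t ∈ Set.Ioo a b,
      (∀ x ∈ Set.Ioo (0:ℝ) 1,
        deriv (fun s => u s x - ∫ y in (0:ℝ)..x, K x y * u s y) t
          = θ * deriv (deriv (fun x' => u t x' - ∫ y in (0:ℝ)..x', K x' y * u t y)) x
            - c * (u t x - ∫ y in (0:ℝ)..x, K x y * u t y)) ∧
      (u t 0 - ∫ y in (0:ℝ)..(0:ℝ), K 0 y * u t y) = 0 ∧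
      (u t 1 - ∫ y in (0:ℝ)..1, K 1 y * u t y)
        = u t 1 - ∫ y in (0:ℝ)..1, K 1 y * u t y :=
  statement_13_general θ lam c a b hθ K hKreg hKpde hKdiag hK0 u hreg hC2 hpde hbc
end
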